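/- Let $\Phi : \mathbb{R} \to \mathbb{R}$ be $2\pi$-periodic, integrable on $[0, 2\pi]$, and let $U(re^{i\vartheta}) = \frac{1}{2\pi}\int_0^{2\pi} \frac{1-r^2}{1 - 2r\cos(\vartheta - t) + r^2}\,\Phi(t)\,dt$ be its Poisson integral in the unit disk. If $\Phi$ is differentiable at $\vartheta_0$, then $\frac{\partial U}{\partial \vartheta}(re^{i\vartheta_0}) \to \Phi'(\vartheta_0)$ as $r \to 1^-$ (radial limit). -/

import Mathlib

open MeasureTheory Filter Real intervalIntegral

/-- The Poisson integral of `Φ` in the unit disk, in polar coordinates. -/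
noncomputable def poissonInt (Φ : ℝ → ℝ) (r θ : ℝ) : ℝ :=
  (1 / (2 * π)) * ∫ t in (0 : ℝ)..(2 * π),
    ((1 - r ^ 2) / (1 - 2 * r * Real.cos (θ - t) + r ^ 2)) * Φ t

/-!
With `g(s) = Φ(θ₀ - s) - Φ(θ₀) + L s = o(s)`, differentiating under the integral and centring at
`θ₀` gives `∂U/∂θ(re^{iθ₀}) = (1/2π) ∫_{-π}^{π} P_r'(s) Φ(θ₀ - s) ds`. As `∫ P_r' = 0` and, by
parts, `∫ -s P_r'(s) ds = 2π (1 - P_r(π))`, this is `(1/2π) ∫ P_r' g + L (1 - P_r(π))`, and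
`P_r(π) = (1 - r)/(1 + r) → 0`. Finally `∫ P_r' g → 0`, because the kernels `s P_r'(s)` are `≤ 0`
with total mass at most `2π` while `P_r' → 0` uniformly away from `s = 0`.
-/

open Function Set Topology Asymptotics Interval

theorem hasDerivAt_intervalIntegral_comp_sub_mul {k k' Φ : ℝ → ℝ} {a b C : ℝ}
    (hk : ∀ x, HasDerivAt k (k' x) x) (hk' : Continuous k') (hC : ∀ x, |k' x| ≤ C)
    (hΦ : IntervalIntegrable Φ volume a b) (θ : ℝ) :
    HasDerivAt (fun θ => ∫ t in a..b, k (θ - t) * Φ t) (∫ t in a..b, k' (θ - t) * Φ t) θ := by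
  have hkc : Continuous k := continuous_iff_continuousAt.2 fun x => (hk x).continuousAt
  have hmeas : AEStronglyMeasurable Φ (volume.restrict (Ι a b)) := hΦ.def'.aestronglyMeasurable
  refine (hasDerivAt_integral_of_dominated_loc_of_deriv_le (F := fun x t => k (x - t) * Φ t)
    (F' := fun x t => k' (x - t) * Φ t) (bound := fun t => C * |Φ t|)
    univ_mem (Eventually.of_forall fun x => ?_) ?_ ?_ ?_ (hΦ.abs.const_mul C) ?_).2
  · exact ((hkc.comp (continuous_const.sub continuous_id)).aestronglyMeasurable).mul hmeas
  · exact hΦ.continuousOn_mul (hkc.comp (continuous_const.sub continuous_id)).continuousOn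
  · exact ((hk'.comp (continuous_const.sub continuous_id)).aestronglyMeasurable).mul hmeas
  · refine Eventually.of_forall fun t _ x _ => ?_
    rw [norm_mul, Real.norm_eq_abs, Real.norm_eq_abs]
    exact mul_le_mul_of_nonneg_right (hC _) (abs_nonneg _)
  · refine Eventually.of_forall fun t _ x _ => ?_
    simpa using ((hk (x - t)).comp x ((hasDerivAt_id x).sub_const t)).mul_const (Φ t)

theorem Function.Periodic.intervalIntegral_comp_sub_left {E : Type*} [NormedAddCommGroup E]
    [NormedSpace ℝ E] {F : ℝ → E} {T : ℝ}
    (hF : Periodic F T) (θ a b : ℝ) :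
    ∫ t in a..a + T, F (θ - t) = ∫ s in b..b + T, F s := by
  rw [intervalIntegral.integral_comp_sub_left, ← hF.intervalIntegral_add_eq (θ - (a + T)) b]
  congr 1
  ring

theorem intervalIntegrable_comp_sub_left_sub_add {Φ : ℝ → ℝ}
    (hΦ : ∀ a b, IntervalIntegrable Φ volume a b) (θ₀ L a b : ℝ) :
    IntervalIntegrable (fun s => Φ (θ₀ - s) - Φ θ₀ + L * s) volume a b := by
  have h := (hΦ (θ₀ - a) (θ₀ - b)).comp_sub_left θ₀
  simp only [sub_sub_cancel] at h
  exact (h.sub intervalIntegrable_const).add ((continuous_const_mul L).intervalIntegrable _ _)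

theorem HasDerivAt.isLittleO_comp_sub_left_sub_add {Φ : ℝ → ℝ} {L θ₀ : ℝ}
    (hd : HasDerivAt Φ L θ₀) : (fun s => Φ (θ₀ - s) - Φ θ₀ + L * s) =o[𝓝 0] id := by
  have h := (hasDerivAt_iff_isLittleO_nhds_zero.1 hd).comp_tendsto
    (by simpa using continuous_neg.tendsto (0 : ℝ) : Tendsto Neg.neg (𝓝 (0 : ℝ)) (𝓝 0))
  refine isLittleO_neg_right.1 (h.congr_left fun s => ?_)
  simp only [comp_apply, smul_eq_mul]
  ring_nf

theorem tendsto_intervalIntegral_mul_of_isLittleO {ι : Type*} {l : Filter ι}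
    {k : ι → ℝ → ℝ} {g : ℝ → ℝ} {a b C : ℝ} (hab : a ≤ b)
    (hk : ∀ᶠ i in l, Continuous (k i))
    (hmass : ∀ᶠ i in l, ∫ s in a..b, |s * k i s| ≤ C)
    (htail : ∀ δ > 0, TendstoUniformlyOn k 0 l ({s | δ ≤ |s|} ∩ Icc a b))
    (hg : IntervalIntegrable g volume a b) (hg0 : g =o[𝓝 0] id) :
    Tendsto (fun i => ∫ s in a..b, k i s * g s) l (𝓝 0) := by
  set M := ∫ s in a..b, |g s| with hMdef
  have hM : 0 ≤ M := intervalIntegral.integral_nonneg hab fun _ _ => abs_nonneg _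
  rw [Metric.tendsto_nhds]
  intro ε hε
  set ε₁ := ε / (2 * (|C| + 1))
  set η := ε / (2 * (M + 1))
  have hε₁ : 0 < ε₁ := by positivity
  have hη : 0 < η := by positivity
  obtain ⟨δ, hδ, hgδ⟩ := Metric.eventually_nhds_iff.1 (hg0.def hε₁)
  filter_upwards [hk, hmass, Metric.tendstoUniformlyOn_iff.1 (htail δ hδ) η hη]
    with i hki hmi hti
  have hpt : ∀ s ∈ Icc a b, |k i s * g s| ≤ ε₁ * |s * k i s| + η * |g s| := by
    intro s hs
    rw [abs_mul, abs_mul]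
    by_cases hsδ : |s| < δ
    · have hgs : |g s| ≤ ε₁ * |s| := by simpa [Real.dist_eq] using hgδ (by simpa [Real.dist_eq])
      nlinarith [mul_le_mul_of_nonneg_left hgs (abs_nonneg (k i s)),
        mul_nonneg hη.le (abs_nonneg (g s))]
    · have hks : |k i s| < η := by simpa [Real.dist_eq] using hti s ⟨le_of_not_gt hsδ, hs⟩
      nlinarith [mul_le_mul_of_nonneg_right hks.le (abs_nonneg (g s)),
        mul_nonneg hε₁.le (mul_nonneg (abs_nonneg s) (abs_nonneg (k i s)))]
  have hsk : IntervalIntegrable (fun s => |s * k i s|) volume a b :=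
    (continuous_id.mul hki).abs.intervalIntegrable _ _
  have hC : ε₁ * C < ε / 2 := by
    rw [div_mul_eq_mul_div, div_lt_iff₀ (by positivity)]
    nlinarith [le_abs_self C]
  have hηM : η * M < ε / 2 := by
    rw [div_mul_eq_mul_div, div_lt_iff₀ (by positivity)]
    nlinarith
  calc dist (∫ s in a..b, k i s * g s) 0
      = |∫ s in a..b, k i s * g s| := by rw [Real.dist_eq, sub_zero]
    _ ≤ ∫ s in a..b, |k i s * g s| := intervalIntegral.abs_integral_le_integral_abs hab
    _ ≤ ∫ s in a..b, (ε₁ * |s * k i s| + η * |g s|) :=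
        intervalIntegral.integral_mono_on hab (hg.continuousOn_mul hki.continuousOn).abs
          ((hsk.const_mul ε₁).add (hg.abs.const_mul η)) hpt
    _ = ε₁ * (∫ s in a..b, |s * k i s|) + η * M := by
        rw [intervalIntegral.integral_add (hsk.const_mul ε₁) (hg.abs.const_mul η),
          intervalIntegral.integral_const_mul, intervalIntegral.integral_const_mul]
    _ ≤ ε₁ * C + η * M := by gcongr
    _ < ε := by linarith

section PoissonKernel

/-- Mathlib's `poissonKernel 0 r (exp (s * I))`, as a function of the polar coordinates. -/
noncomputable def diskPoissonKernel (r s : ℝ) : ℝ :=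
  (1 - r ^ 2) / (1 - 2 * r * cos s + r ^ 2)

noncomputable def diskPoissonKernelDeriv (r s : ℝ) : ℝ :=
  -((1 - r ^ 2) * (2 * r * sin s)) / (1 - 2 * r * cos s + r ^ 2) ^ 2

variable {r : ℝ}

theorem mul_cos_le_abs (r s : ℝ) : r * cos s ≤ |r| :=
  (le_abs_self _).trans <| by
    rw [abs_mul]; exact mul_le_of_le_one_right (abs_nonneg r) (abs_cos_le_one s)

theorem one_sub_two_mul_cos_add_sq_pos (hr : |r| < 1) (s : ℝ) :
    0 < 1 - 2 * r * cos s + r ^ 2 := by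
  nlinarith [mul_cos_le_abs r s, sq_abs r, abs_nonneg r]

theorem one_sub_mul_cos_pos (hr : |r| < 1) (s : ℝ) : 0 < 1 - r * cos s := by
  linarith [mul_cos_le_abs r s]

/-- The primitive is `s + 2 arg (1 - r e^{-is})`. -/
theorem hasDerivAt_diskPoissonKernel_primitive (hr : |r| < 1) (s : ℝ) :
    HasDerivAt (fun s => s + 2 * arctan (r * sin s / (1 - r * cos s)))
      (diskPoissonKernel r s) s := by
  have hc := one_sub_mul_cos_pos hr s
  have hq : HasDerivAt (fun s => r * sin s / (1 - r * cos s))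
      ((r * cos s * (1 - r * cos s) - r * sin s * (r * sin s)) / (1 - r * cos s) ^ 2) s := by
    refine ((hasDerivAt_sin s).const_mul r).div ?_ hc.ne'
    simpa using ((hasDerivAt_cos s).const_mul r).const_sub 1
  refine ((hasDerivAt_id s).add (hq.arctan.const_mul 2)).congr_deriv ?_
  have hD := one_sub_two_mul_cos_add_sq_pos hr s
  rw [diskPoissonKernel]
  field_simp
  linear_combination (-2 * r ^ 2 * (1 - r * cos s)) * sin_sq_add_cos_sq s

theorem hasDerivAt_diskPoissonKernel (hr : |r| < 1) (s : ℝ) :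
    HasDerivAt (diskPoissonKernel r) (diskPoissonKernelDeriv r s) s := by
  have hD : HasDerivAt (fun s => 1 - 2 * r * cos s + r ^ 2) (2 * r * sin s) s := by
    simpa using (((hasDerivAt_cos s).const_mul (2 * r)).const_sub 1).add_const (r ^ 2)
  refine ((hasDerivAt_const s (1 - r ^ 2)).div hD
    (one_sub_two_mul_cos_add_sq_pos hr s).ne').congr_deriv ?_
  rw [diskPoissonKernelDeriv]
  ring

theorem continuous_diskPoissonKernel (hr : |r| < 1) : Continuous (diskPoissonKernel r) :=
  continuous_iff_continuousAt.2 fun s => (hasDerivAt_diskPoissonKernel hr s).continuousAt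

theorem continuous_diskPoissonKernelDeriv (hr : |r| < 1) :
    Continuous (diskPoissonKernelDeriv r) :=
  Continuous.div (by fun_prop) (by fun_prop)
    fun s => (pow_pos (one_sub_two_mul_cos_add_sq_pos hr s) 2).ne'

theorem diskPoissonKernelDeriv_periodic (r : ℝ) : Periodic (diskPoissonKernelDeriv r) (2 * π) :=
  fun s => by simp only [diskPoissonKernelDeriv, cos_add_two_pi, sin_add_two_pi]

theorem diskPoissonKernel_neg (r s : ℝ) : diskPoissonKernel r (-s) = diskPoissonKernel r s := by
  rw [diskPoissonKernel, diskPoissonKernel, cos_neg]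

theorem diskPoissonKernel_nonneg (hr : |r| < 1) (s : ℝ) : 0 ≤ diskPoissonKernel r s :=
  div_nonneg (by nlinarith [sq_abs r, abs_nonneg r]) (one_sub_two_mul_cos_add_sq_pos hr s).le

theorem integral_diskPoissonKernel (hr : |r| < 1) :
    ∫ s in -π..π, diskPoissonKernel r s = 2 * π := by
  rw [integral_eq_sub_of_hasDerivAt (fun s _ => hasDerivAt_diskPoissonKernel_primitive hr s)
    ((continuous_diskPoissonKernel hr).intervalIntegrable _ _)]
  simp only [sin_pi, sin_neg, cos_neg, mul_zero, neg_zero, zero_div, arctan_zero]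
  ring

theorem integral_diskPoissonKernelDeriv (hr : |r| < 1) :
    ∫ s in -π..π, diskPoissonKernelDeriv r s = 0 := by
  rw [integral_eq_sub_of_hasDerivAt (fun s _ => hasDerivAt_diskPoissonKernel hr s)
    ((continuous_diskPoissonKernelDeriv hr).intervalIntegrable _ _), diskPoissonKernel_neg,
    sub_self]

theorem integral_neg_mul_diskPoissonKernelDeriv (hr : |r| < 1) :
    ∫ s in -π..π, -s * diskPoissonKernelDeriv r s = 2 * π * (1 - diskPoissonKernel r π) := by
  rw [integral_mul_deriv_eq_deriv_mul (u := fun s => -s) (fun s _ => hasDerivAt_neg' s)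
    (fun s _ => hasDerivAt_diskPoissonKernel hr s) intervalIntegrable_const
    ((continuous_diskPoissonKernelDeriv hr).intervalIntegrable _ _)]
  simp only [diskPoissonKernel_neg, neg_one_mul, intervalIntegral.integral_neg,
    integral_diskPoissonKernel hr]
  ring

theorem mul_diskPoissonKernelDeriv_nonpos (h0 : 0 ≤ r) (h1 : r ≤ 1) {s : ℝ} (hs : |s| ≤ π) :
    s * diskPoissonKernelDeriv r s ≤ 0 := by
  have hss : 0 ≤ s * sin s := by
    rcases le_total 0 s with h | h
    · exact mul_nonneg h (sin_nonneg_of_nonneg_of_le_pi h (le_of_abs_le hs))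
    · nlinarith [sin_nonpos_of_nonpos_of_neg_pi_le h (neg_le_of_abs_le hs)]
  have hcoef : 0 ≤ (1 - r ^ 2) * (2 * r) := by nlinarith
  rw [diskPoissonKernelDeriv, mul_div_assoc']
  refine div_nonpos_of_nonpos_of_nonneg ?_ (sq_nonneg _)
  nlinarith [mul_nonneg hcoef hss]

theorem integral_abs_mul_diskPoissonKernelDeriv_le (h0 : 0 ≤ r) (h1 : r < 1) :
    ∫ s in -π..π, |s * diskPoissonKernelDeriv r s| ≤ 2 * π := by
  have hr : |r| < 1 := abs_lt.2 ⟨by linarith, h1⟩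
  have habs : EqOn (fun s => |s * diskPoissonKernelDeriv r s|)
      (fun s => -s * diskPoissonKernelDeriv r s) (uIcc (-π) π) := fun s hs => by
    rw [uIcc_of_le (by linarith [pi_pos])] at hs
    dsimp only
    rw [abs_of_nonpos (mul_diskPoissonKernelDeriv_nonpos h0 h1.le (abs_le.2 hs)), neg_mul]
  rw [integral_congr habs, integral_neg_mul_diskPoissonKernelDeriv hr]
  nlinarith [diskPoissonKernel_nonneg hr π, pi_pos]

theorem abs_diskPoissonKernelDeriv_le_of_cos_le {c s : ℝ} (h0 : 0 < r) (h1 : r ≤ 1)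
    (hc : c < 1) (hs : cos s ≤ c) :
    |diskPoissonKernelDeriv r s| ≤ (1 - r ^ 2) * (2 * r) / (2 * r * (1 - c)) ^ 2 := by
  have hlow : 2 * r * (1 - c) ≤ 1 - 2 * r * cos s + r ^ 2 := by nlinarith [sq_nonneg (1 - r)]
  have hlow0 : 0 < 2 * r * (1 - c) := mul_pos (by positivity) (by linarith)
  have hcoef : 0 ≤ 1 - r ^ 2 := by nlinarith
  rw [diskPoissonKernelDeriv, abs_div, abs_neg, abs_mul, abs_mul, abs_of_nonneg hcoef,
    abs_of_pos (by positivity : 0 < 2 * r), abs_pow,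
    abs_of_pos (hlow0.trans_le hlow)]
  exact div_le_div₀ (by positivity)
    (mul_le_mul_of_nonneg_left (mul_le_of_le_one_right (by positivity) (abs_sin_le_one s)) hcoef)
    (by positivity) (pow_le_pow_left₀ hlow0.le hlow 2)

theorem tendstoUniformlyOn_diskPoissonKernelDeriv {δ : ℝ} (hδ : 0 < δ) :
    TendstoUniformlyOn diskPoissonKernelDeriv 0 (𝓝[<] 1) ({s | δ ≤ |s|} ∩ Icc (-π) π) := by
  set c := cos (min δ π)
  have hc : c < 1 := by
    simpa using cos_lt_cos_of_nonneg_of_le_pi le_rfl (min_le_right δ π) (lt_min hδ pi_pos)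
  have hcos : ∀ s ∈ {s | δ ≤ |s|} ∩ Icc (-π) π, cos s ≤ c := fun s ⟨hδs, hs⟩ => by
    rw [← cos_abs]
    exact cos_le_cos_of_nonneg_of_le_pi (le_min hδ.le pi_pos.le) (abs_le.2 hs)
      ((min_le_left δ π).trans hδs)
  have hbound : Tendsto (fun r : ℝ => (1 - r ^ 2) * (2 * r) / (2 * r * (1 - c)) ^ 2)
      (𝓝[<] 1) (𝓝 0) := by
    have hcont : ContinuousAt (fun r : ℝ => (1 - r ^ 2) * (2 * r) / (2 * r * (1 - c)) ^ 2) 1 :=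
      ContinuousAt.div (by fun_prop) (by fun_prop) (by simp; linarith)
    simpa using hcont.tendsto.mono_left nhdsWithin_le_nhds
  rw [Metric.tendstoUniformlyOn_iff]
  intro η hη
  filter_upwards [hbound.eventually (gt_mem_nhds hη), Ioo_mem_nhdsLT one_pos] with r hrη hr s hs
  rw [Pi.zero_apply, dist_zero_left, Real.norm_eq_abs]
  exact (abs_diskPoissonKernelDeriv_le_of_cos_le hr.1 hr.2.le hc (hcos s hs)).trans_lt hrη

theorem tendsto_diskPoissonKernel_pi : Tendsto (fun r => diskPoissonKernel r π) (𝓝[<] 1) (𝓝 0) := by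
  have hcont : ContinuousAt (fun r => diskPoissonKernel r π) 1 :=
    ContinuousAt.div (by fun_prop) (by fun_prop) (by norm_num)
  simpa [diskPoissonKernel] using hcont.tendsto.mono_left nhdsWithin_le_nhds

end PoissonKernel

theorem hasDerivAt_poissonInt {Φ : ℝ → ℝ} (hint : IntervalIntegrable Φ volume 0 (2 * π))
    {r : ℝ} (hr : |r| < 1) (θ : ℝ) :
    HasDerivAt (poissonInt Φ r)
      (1 / (2 * π) * ∫ t in (0 : ℝ)..2 * π, diskPoissonKernelDeriv r (θ - t) * Φ t) θ := by
  have hQ := continuous_diskPoissonKernelDeriv hr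
  obtain ⟨C, hC⟩ := isBounded_iff_forall_norm_le.1
    ((diskPoissonKernelDeriv_periodic r).isBounded_of_continuous two_pi_pos.ne' hQ)
  exact (hasDerivAt_intervalIntegral_comp_sub_mul (hasDerivAt_diskPoissonKernel hr) hQ
    (fun x => hC _ (mem_range_self x)) hint θ).const_mul (1 / (2 * π))

theorem integral_diskPoissonKernelDeriv_mul_comp_sub {Φ : ℝ → ℝ} (hper : Periodic Φ (2 * π))
    (r θ : ℝ) :
    ∫ t in (0 : ℝ)..2 * π, diskPoissonKernelDeriv r (θ - t) * Φ t
      = ∫ s in -π..π, diskPoissonKernelDeriv r s * Φ (θ - s) := by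
  have h := ((diskPoissonKernelDeriv_periodic r).mul (hper.const_sub θ)
    ).intervalIntegral_comp_sub_left θ 0 (-π)
  simp only [zero_add, Pi.mul_apply, sub_sub_cancel] at h
  rwa [show -π + 2 * π = π by ring] at h

theorem integral_diskPoissonKernelDeriv_mul_eq {Φ : ℝ → ℝ}
    (hΦ : ∀ a b, IntervalIntegrable Φ volume a b) {r : ℝ} (hr : |r| < 1) (θ₀ L : ℝ) :
    ∫ s in -π..π, diskPoissonKernelDeriv r s * Φ (θ₀ - s)
      = (∫ s in -π..π, diskPoissonKernelDeriv r s * (Φ (θ₀ - s) - Φ θ₀ + L * s))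
        + 2 * π * L * (1 - diskPoissonKernel r π) := by
  have hQ := continuous_diskPoissonKernelDeriv hr
  have hQg := (intervalIntegrable_comp_sub_left_sub_add hΦ θ₀ L (-π) π).continuousOn_mul
    hQ.continuousOn
  have hQc : IntervalIntegrable (fun s => Φ θ₀ * diskPoissonKernelDeriv r s) volume (-π) π :=
    (hQ.const_mul _).intervalIntegrable _ _
  have hQs : IntervalIntegrable (fun s => L * (-s * diskPoissonKernelDeriv r s)) volume (-π) π :=
    ((continuous_neg.mul hQ).const_mul _).intervalIntegrable _ _
  have hsplit : ∀ s, diskPoissonKernelDeriv r s * Φ (θ₀ - s) =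
      diskPoissonKernelDeriv r s * (Φ (θ₀ - s) - Φ θ₀ + L * s)
        + Φ θ₀ * diskPoissonKernelDeriv r s + L * (-s * diskPoissonKernelDeriv r s) := fun s => by
    ring
  rw [integral_congr fun s _ => hsplit s, integral_add (hQg.add hQc) hQs, integral_add hQg hQc,
    intervalIntegral.integral_const_mul, intervalIntegral.integral_const_mul,
    integral_diskPoissonKernelDeriv hr, integral_neg_mul_diskPoissonKernelDeriv hr]
  ring

theorem deriv_poissonInt_eq {Φ : ℝ → ℝ} (hper : Periodic Φ (2 * π))
    (hΦ : ∀ a b, IntervalIntegrable Φ volume a b) {r : ℝ} (hr : |r| < 1) (θ₀ L : ℝ) :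
    deriv (poissonInt Φ r) θ₀ =
      (2 * π)⁻¹ * (∫ s in -π..π, diskPoissonKernelDeriv r s * (Φ (θ₀ - s) - Φ θ₀ + L * s))
        + L * (1 - diskPoissonKernel r π) := by
  rw [(hasDerivAt_poissonInt (hΦ 0 (2 * π)) hr θ₀).deriv,
    integral_diskPoissonKernelDeriv_mul_comp_sub hper, integral_diskPoissonKernelDeriv_mul_eq hΦ hr θ₀ L,
    one_div, mul_add, ← mul_assoc, ← mul_assoc, inv_mul_cancel₀ two_pi_pos.ne', one_mul]

/-- Fatou's theorem (radial case) for the angular derivative of the Poisson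
integral: if the `2π`-periodic integrable `Φ` is differentiable at `θ₀`, then
`∂U/∂θ(re^{iθ₀}) → Φ'(θ₀)` as `r → 1⁻`. -/
theorem fatou_angular_deriv_radial (Φ : ℝ → ℝ)
    (hper : ∀ t : ℝ, Φ (t + 2 * π) = Φ t)
    (hint : IntervalIntegrable Φ volume 0 (2 * π))
    (θ₀ L : ℝ) (hd : HasDerivAt Φ L θ₀) :
    Tendsto (fun r : ℝ => deriv (fun θ => poissonInt Φ r θ) θ₀)
      (nhdsWithin 1 (Set.Iio 1)) (nhds L) := by
  have hΦ := Periodic.intervalIntegrable₀ hper two_pi_pos.ne' hint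
  have hnear : ∀ᶠ r in 𝓝[<] (1 : ℝ), r ∈ Ioo 0 1 := Ioo_mem_nhdsLT one_pos
  have hnear_abs : ∀ᶠ r in 𝓝[<] (1 : ℝ), |r| < 1 :=
    hnear.mono fun r hr => abs_lt.2 ⟨by linarith [hr.1], hr.2⟩
  have hkernel := tendsto_intervalIntegral_mul_of_isLittleO (neg_le_self pi_pos.le)
    (hnear_abs.mono fun _ => continuous_diskPoissonKernelDeriv)
    (hnear.mono fun _ hr => integral_abs_mul_diskPoissonKernelDeriv_le hr.1.le hr.2)
    (fun _ => tendstoUniformlyOn_diskPoissonKernelDeriv)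
    (intervalIntegrable_comp_sub_left_sub_add hΦ θ₀ L _ _) hd.isLittleO_comp_sub_left_sub_add
  refine Tendsto.congr' (hnear_abs.mono fun r hr => (deriv_poissonInt_eq hper hΦ hr θ₀ L).symm) ?_
  simpa using (hkernel.const_mul (2 * π)⁻¹).add
    ((tendsto_diskPoissonKernel_pi.const_sub 1).const_mul L)
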